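/- Let π = a_1a_2⋯a_n ∈ S_n be a separable permutation with a_1 > a_n. Then π = π_A π_B where, for some 1 ≤ m < n, π_A is a permutation of the letters {n−m+1,…,n} and π_B is a permutation of the letters {1,…,n−m}, and F(Λ_π, q) = [n choose m]_q · F(Λ_{σ_A}, q) · F(Λ_{σ_B}, q), where σ_A ∈ S_m is obtained from π_A by subtracting n−m from each letter, σ_B ∈ S_{n−m} is π_B, and [n choose m]_q = [n]!/([m]![n−m]!). -/

import Mathlib

open Polynomial

namespace SepPerm

/-- The length (number of inversions) of a permutation of `Fin n`. -/
def invCount {n : ℕ} (π : Equiv.Perm (Fin n)) : ℕ :=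
  (Finset.univ.filter fun p : Fin n × Fin n => p.1 < p.2 ∧ π p.2 < π p.1).card

/-- The (right) weak Bruhat order: `u ≤ v` iff `ℓ(u) + ℓ(u⁻¹v) = ℓ(v)`. -/
def wle {n : ℕ} (u v : Equiv.Perm (Fin n)) : Prop :=
  invCount u + invCount (u⁻¹ * v) = invCount v

open scoped Classical in
/-- `F(Λ_π, q) = ∑_{u ≤ π} q^{ℓ(u)}`, rank generating function of `[id, π]`. -/
noncomputable def FLam {n : ℕ} (π : Equiv.Perm (Fin n)) : Polynomial ℤ :=
  ∑ u ∈ Finset.univ.filter (fun u => wle u π), X ^ invCount u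

open scoped Classical in
/-- `F(V_π, q) = ∑_{v ≥ π} q^{ℓ(v) - ℓ(π)}`, rank generating function of `[π, w₀]`. -/
noncomputable def FV {n : ℕ} (π : Equiv.Perm (Fin n)) : Polynomial ℤ :=
  ∑ v ∈ Finset.univ.filter (fun v => wle π v), X ^ (invCount v - invCount π)

/-- A permutation is separable iff it avoids the patterns 3142 and 2413. -/
def IsSeparable {n : ℕ} (π : Equiv.Perm (Fin n)) : Prop :=
  (¬ ∃ i j k h : Fin n, i < j ∧ j < k ∧ k < h ∧
      π j < π h ∧ π h < π i ∧ π i < π k) ∧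
  (¬ ∃ i j k h : Fin n, i < j ∧ j < k ∧ k < h ∧
      π k < π i ∧ π i < π h ∧ π h < π j)

/-- The longest element `w₀ = n, n-1, …, 1`. -/
def w0 (n : ℕ) : Equiv.Perm (Fin n) := Fin.revPerm

/-- The complement `π^c`, with `π^c(i) = n + 1 - π(i)` (one-indexed). -/
def compl {n : ℕ} (π : Equiv.Perm (Fin n)) : Equiv.Perm (Fin n) := w0 n * π

/-- `[k] = 1 + q + ⋯ + q^{k-1}`. -/
noncomputable def qnum (k : ℕ) : Polynomial ℤ := ∑ i ∈ Finset.range k, X ^ i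

/-- `[N]! = [1][2]⋯[N]`. -/
noncomputable def qfact (N : ℕ) : Polynomial ℤ := ∏ k ∈ Finset.range N, qnum (k + 1)

/-- The inversion poset `P_π` on the letters: `x ≤_P y` iff `x ≤ y` and `π⁻¹x ≤ π⁻¹y`. -/
def invLe {n : ℕ} (π : Equiv.Perm (Fin n)) (x y : Fin n) : Prop :=
  x ≤ y ∧ π⁻¹ x ≤ π⁻¹ y

/-- `σ` is a linear extension of the order `r`: whenever `i <_r j`, `i` precedes `j`
in the one-line notation of `σ` (i.e. the position `σ⁻¹ i` comes before `σ⁻¹ j`). -/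
def IsLinExt {N : ℕ} (r : Fin N → Fin N → Prop) (σ : Equiv.Perm (Fin N)) : Prop :=
  ∀ i j, r i j → i ≠ j → σ.symm i < σ.symm j

open scoped Classical in
/-- `F(𝓛(P), q) = ∑_{σ ∈ 𝓛(P)} q^{ℓ(σ)}`, generating function of linear extensions
by number of inversions. -/
noncomputable def FLin {N : ℕ} (r : Fin N → Fin N → Prop) : Polynomial ℤ :=
  ∑ σ ∈ Finset.univ.filter (fun σ => IsLinExt r σ), X ^ invCount σ

/-!
Record a permutation by its inversions as pairs of values. For an upper set `T` of values, `u`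
is determined by the set `P` of positions carrying its values in `T` together with its patterns
on `T` and on `Tᶜ`, and the inversions of `u` are those of the two patterns plus the crossings
of `P`. Hence `∑ q^ℓ(u)` factors as `qbinom n k` times the two pattern sums; without constraints
this gives `[n]! = qbinom n k · [k]! [n-k]!` (and, for `k = 1`, the product formula for `[n]!`).

Weak order is inclusion of inversion sets. A separable `π` with `π(1) > π(n)` is a skew sum
(a failed cut produces a `3142`), so every pair of values crossing the cut is an inversion of `π`
and `u ≤ π` iff both patterns of `u` lie below those of `π`: the interval sum factors the same way.
-/

open Finset Equiv

variable {n : ℕ}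

def invSet (w : Perm (Fin n)) : Finset (Fin n × Fin n) :=
  univ.filter fun p => p.1 < p.2 ∧ w.symm p.2 < w.symm p.1

@[simp]
lemma mem_invSet {w : Perm (Fin n)} {p : Fin n × Fin n} :
    p ∈ invSet w ↔ p.1 < p.2 ∧ w.symm p.2 < w.symm p.1 := by
  simp [invSet]

lemma invCount_eq_card_invSet (w : Perm (Fin n)) : invCount w = #(invSet w) :=
  card_equiv ((w.prodCongr w).trans (prodComm _ _)) fun p => by simp [and_comm]

@[simp]
lemma invCount_one : invCount (1 : Perm (Fin n)) = 0 := by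
  simp only [invCount, card_eq_zero, filter_eq_empty_iff]
  exact fun _ _ h => lt_asymm h.1 h.2

lemma invCount_inv_mul (u v : Perm (Fin n)) :
    invCount (u⁻¹ * v) = #(invSet u \ invSet v) + #(invSet v \ invSet u) := by
  -- `(i, j) ↦ (v i, v j)` turns the inversions of `u⁻¹ * v` into the value pairs on whose order
  -- `u` and `v` disagree
  set D := univ.filter fun p : Fin n × Fin n => v.symm p.1 < v.symm p.2 ∧ u.symm p.2 < u.symm p.1
  have hD : invCount (u⁻¹ * v) = #D :=
    card_equiv (v.prodCongr v) fun p => by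
      simp only [D, mem_filter]; simp [Perm.inv_def]
  have hlt : D.filter (fun p => p.1 < p.2) = invSet u \ invSet v := by
    ext ⟨x, y⟩
    simp only [D, mem_filter, mem_univ, true_and, mem_sdiff, mem_invSet]
    constructor
    · rintro ⟨⟨hv, hu⟩, hxy⟩
      exact ⟨⟨hxy, hu⟩, fun h => lt_asymm hv h.2⟩
    · rintro ⟨⟨hxy, hu⟩, hv⟩
      refine ⟨⟨?_, hu⟩, hxy⟩
      exact lt_of_le_of_ne (not_lt.mp (fun h => hv ⟨hxy, h⟩)) (by simpa using hxy.ne)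
  have hgt : #(D.filter (fun p => ¬ p.1 < p.2)) = #(invSet v \ invSet u) := by
    refine card_equiv (prodComm _ _) fun ⟨x, y⟩ => ?_
    simp only [D, mem_filter, mem_univ, true_and, mem_sdiff, mem_invSet, prodComm_apply,
      Prod.swap_prod_mk, not_lt, not_and]
    constructor
    · rintro ⟨⟨hv, hu⟩, hyx⟩
      refine ⟨⟨lt_of_le_of_ne hyx ?_, hv⟩, fun _ => hu.le⟩
      rintro rfl
      exact lt_irrefl _ hv
    · rintro ⟨⟨hyx, hv⟩, hu⟩
      exact ⟨⟨hv, lt_of_le_of_ne (hu hyx) (by simpa using hyx.ne)⟩, hyx.le⟩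
  rw [hD, ← card_filter_add_card_filter_not (s := D) (fun p => p.1 < p.2), hlt, hgt]

lemma wle_iff_invSet_subset (u v : Perm (Fin n)) : wle u v ↔ invSet u ⊆ invSet v := by
  rw [wle, invCount_inv_mul, invCount_eq_card_invSet, invCount_eq_card_invSet,
    ← sdiff_eq_empty_iff_subset, ← card_eq_zero]
  have hu := card_sdiff_add_card_inter (invSet u) (invSet v)
  have hv := card_sdiff_add_card_inter (invSet v) (invSet u)
  rw [inter_comm] at hv
  omega

def positions (u : Perm (Fin n)) (V : Finset (Fin n)) : Finset (Fin n) :=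
  V.map u.symm.toEmbedding

@[simp]
lemma mem_positions {u : Perm (Fin n)} {V : Finset (Fin n)} {x : Fin n} :
    x ∈ positions u V ↔ u x ∈ V := by
  simp [positions, mem_map_equiv]

lemma card_positions (u : Perm (Fin n)) (V : Finset (Fin n)) : #(positions u V) = #V :=
  card_map _

lemma positions_compl (u : Perm (Fin n)) (V : Finset (Fin n)) :
    positions u Vᶜ = (positions u V)ᶜ := by
  ext; simp

/-- The pattern of `u` on the value set `V`: the values of `u` lying in `V`, read left to right
and standardized to `Fin k`. -/
def pattern (u : Perm (Fin n)) (V : Finset (Fin n)) {k : ℕ} (hV : #V = k) : Perm (Fin k) :=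
  ((positions u V).orderIsoOfFin ((card_positions u V).trans hV)).toEquiv.trans
    ((u.subtypeEquiv fun _ => mem_positions).trans (V.orderIsoOfFin hV).symm.toEquiv)

lemma exists_orderEmbOfFin_eq {α : Type*} [LinearOrder α] {s : Finset α} {k : ℕ} (h : #s = k)
    {x : α} (hx : x ∈ s) : ∃ i, s.orderEmbOfFin h i = x := by
  rw [← Set.mem_range, range_orderEmbOfFin]
  exact hx

lemma orderEmbOfFin_eq_of_mem_iff {s : Finset (Fin n)} {c k : ℕ} (hck : c + k ≤ n)
    (hs : ∀ x : Fin n, x ∈ s ↔ c ≤ (x : ℕ) ∧ (x : ℕ) < c + k) (h : #s = k) (i : Fin k) :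
    s.orderEmbOfFin h i = ⟨c + i, by omega⟩ :=
  (congrFun (orderEmbOfFin_unique h (f := fun i => ⟨c + i, by omega⟩)
    (fun i => (hs _).2 ⟨Nat.le_add_right _ _, Nat.add_lt_add_left i.2 c⟩)
    fun _ _ hij => Fin.lt_def.2 (Nat.add_lt_add_left hij c)) i).symm

section pattern

variable {V : Finset (Fin n)} {k : ℕ} (hV : #V = k)

lemma orderEmbOfFin_pattern_apply (u : Perm (Fin n)) (i : Fin k) :
    V.orderEmbOfFin hV (pattern u V hV i) =
      u ((positions u V).orderEmbOfFin ((card_positions u V).trans hV) i) := by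
  simp [pattern, ← coe_orderIsoOfFin_apply]

lemma mem_invSet_pattern {u : Perm (Fin n)} {i j : Fin k} :
    (i, j) ∈ invSet (pattern u V hV) ↔
      (V.orderEmbOfFin hV i, V.orderEmbOfFin hV j) ∈ invSet u := by
  have hsymm : ∀ l, u.symm (V.orderEmbOfFin hV l) =
      (positions u V).orderEmbOfFin ((card_positions u V).trans hV) ((pattern u V hV).symm l) :=
    fun l => by
      rw [Equiv.symm_apply_eq, ← orderEmbOfFin_pattern_apply, Equiv.apply_symm_apply]
  simp only [mem_invSet, hsymm, OrderEmbedding.lt_iff_lt]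

lemma card_invSet_pattern (u : Perm (Fin n)) :
    #(invSet (pattern u V hV)) = #((invSet u).filter fun p => p.1 ∈ V ∧ p.2 ∈ V) := by
  set e := V.orderEmbOfFin hV
  refine card_nbij (fun p => (e p.1, e p.2)) (fun p hp => ?_) (fun p _ q _ h => ?_) ?_
  · simp only [mem_coe, mem_filter]
    exact ⟨(mem_invSet_pattern hV).1 hp, orderEmbOfFin_mem V hV _, orderEmbOfFin_mem V hV _⟩
  · simp only [Prod.mk.injEq, e.injective.eq_iff] at h
    exact Prod.ext h.1 h.2
  · rintro ⟨x, y⟩ hp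
    simp only [mem_coe, mem_filter] at hp
    obtain ⟨hp, hx, hy⟩ := hp
    obtain ⟨i, rfl⟩ := exists_orderEmbOfFin_eq hV hx
    obtain ⟨j, rfl⟩ := exists_orderEmbOfFin_eq hV hy
    exact ⟨(i, j), (mem_invSet_pattern hV).2 hp, rfl⟩

lemma invSet_pattern_subset_iff {u v : Perm (Fin n)} :
    invSet (pattern u V hV) ⊆ invSet (pattern v V hV) ↔
      ∀ x ∈ V, ∀ y ∈ V, (x, y) ∈ invSet u → (x, y) ∈ invSet v := by
  constructor
  · intro h x hx y hy hxy
    obtain ⟨i, rfl⟩ := exists_orderEmbOfFin_eq hV hx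
    obtain ⟨j, rfl⟩ := exists_orderEmbOfFin_eq hV hy
    rw [← mem_invSet_pattern] at hxy ⊢
    exact h hxy
  · intro h ⟨i, j⟩ hij
    rw [mem_invSet_pattern] at hij ⊢
    exact h _ (orderEmbOfFin_mem V hV _) _ (orderEmbOfFin_mem V hV _) hij

lemma eq_of_pattern_eq {u v : Perm (Fin n)} (hP : positions u V = positions v V)
    (h : pattern u V hV = pattern v V hV) {x : Fin n} (hx : u x ∈ V) : u x = v x := by
  have hPu := (card_positions u V).trans hV
  have hPv := (card_positions v V).trans hV
  have he : (positions u V).orderEmbOfFin hPu = (positions v V).orderEmbOfFin hPv := by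
    congr
  obtain ⟨i, rfl⟩ := exists_orderEmbOfFin_eq hPu (mem_positions.2 hx)
  rw [← orderEmbOfFin_pattern_apply hV, h, orderEmbOfFin_pattern_apply hV, he]

end pattern

def crossings (P : Finset (Fin n)) : ℕ :=
  #(univ.filter fun p : Fin n × Fin n => p.1 ∈ P ∧ p.2 ∉ P ∧ p.1 < p.2)

section upperSet

variable {T : Finset (Fin n)} (hT : IsUpperSet (T : Set (Fin n)))
include hT

lemma mem_of_lt_of_mem {x y : Fin n} (hxy : x < y) (hx : x ∈ T) : y ∈ T := by
  simpa using hT hxy.le (mem_coe.2 hx)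

lemma card_invSet_filter_crossing (u : Perm (Fin n)) :
    #((invSet u).filter fun p => p.1 ∉ T ∧ p.2 ∈ T) = crossings (positions u T) := by
  refine card_equiv ((u.symm.prodCongr u.symm).trans (prodComm _ _)) fun ⟨x, y⟩ => ?_
  simp only [mem_filter, mem_invSet, mem_univ, true_and, trans_apply, prodCongr_apply,
    prodComm_apply, Prod.swap_prod_mk, Prod.map_apply, mem_positions, apply_symm_apply]
  constructor
  · rintro ⟨⟨-, hyx⟩, hx, hy⟩
    exact ⟨hy, hx, hyx⟩
  · rintro ⟨hy, hx, hyx⟩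
    refine ⟨⟨lt_of_not_ge fun hyx' => hx ?_, hyx⟩, hx, hy⟩
    exact hT hyx' hy

lemma invCount_eq_crossings_add {k : ℕ} (hk : #T = k) (hk' : #Tᶜ = n - k) (u : Perm (Fin n)) :
    invCount u = crossings (positions u T) + invCount (pattern u T hk) +
      invCount (pattern u Tᶜ hk') := by
  simp only [invCount_eq_card_invSet, card_invSet_pattern, ← card_invSet_filter_crossing hT,
    mem_compl]
  set S := invSet u
  have hup : S.filter (fun p => p.1 ∈ T) = S.filter (fun p => p.1 ∈ T ∧ p.2 ∈ T) :=
    filter_congr fun p hp => ⟨fun h => ⟨h, mem_of_lt_of_mem hT (mem_invSet.1 hp).1 h⟩, And.left⟩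
  have h1 := card_filter_add_card_filter_not (s := S) (fun p => p.1 ∈ T)
  have h2 := card_filter_add_card_filter_not (s := S.filter (fun p => p.1 ∉ T)) (fun p => p.2 ∈ T)
  rw [filter_filter, filter_filter] at h2
  rw [hup] at h1
  omega

lemma wle_iff_wle_pattern {k : ℕ} (hk : #T = k) (hk' : #Tᶜ = n - k) {π : Perm (Fin n)}
    (hπ : ∀ x ∉ T, ∀ y ∈ T, π.symm y < π.symm x) (u : Perm (Fin n)) :
    wle u π ↔
      wle (pattern u T hk) (pattern π T hk) ∧ wle (pattern u Tᶜ hk') (pattern π Tᶜ hk') := by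
  simp only [wle_iff_invSet_subset, invSet_pattern_subset_iff]
  constructor
  · intro h
    exact ⟨fun x _ y _ hxy => h hxy, fun x _ y _ hxy => h hxy⟩
  · rintro ⟨hTT, hCC⟩ ⟨x, y⟩ hxy
    by_cases hy : y ∈ T
    · by_cases hx : x ∈ T
      · exact hTT x hx y hy hxy
      · exact mem_invSet.2 ⟨(mem_invSet.1 hxy).1, hπ x hx y hy⟩
    · have hx : x ∉ T := fun hx => hy (mem_of_lt_of_mem hT (mem_invSet.1 hxy).1 hx)
      exact hCC x (mem_compl.2 hx) y (mem_compl.2 hy) hxy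

end upperSet

section split

variable {T : Finset (Fin n)} {k : ℕ} (hk : #T = k) (hk' : #Tᶜ = n - k)

def splitPerm (u : Perm (Fin n)) :
    {P : Finset (Fin n) // #P = k} × Perm (Fin k) × Perm (Fin (n - k)) :=
  (⟨positions u T, (card_positions u T).trans hk⟩, pattern u T hk, pattern u Tᶜ hk')

lemma splitPerm_bijective : Function.Bijective (splitPerm hk hk') := by
  refine (Fintype.bijective_iff_injective_and_card _).2 ⟨fun u v h => ?_, ?_⟩
  · simp only [splitPerm, Prod.mk.injEq, Subtype.mk.injEq] at h
    obtain ⟨hP, hA, hB⟩ := h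
    ext x : 1
    by_cases hx : u x ∈ T
    · exact eq_of_pattern_eq hk hP hA hx
    · refine eq_of_pattern_eq hk' ?_ hB (mem_compl.2 hx)
      rw [positions_compl, positions_compl, hP]
  · have hkn : k ≤ n := by simpa [hk] using card_le_univ T
    simp only [Fintype.card_prod, Fintype.card_finset_len, Fintype.card_perm, Fintype.card_fin]
    rw [← mul_assoc, Nat.choose_mul_factorial_mul_factorial hkn]

end split

/-- The Gaussian binomial coefficient, as the generating function of `k`-subsets of positions
by crossings. -/
noncomputable def qbinom (n k : ℕ) : ℤ[X] :=
  ∑ P ∈ powersetCard k (univ : Finset (Fin n)), X ^ crossings P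

lemma sum_filter_patterns {T : Finset (Fin n)} (hT : IsUpperSet (T : Set (Fin n))) {k : ℕ}
    (hk : #T = k) (hk' : #Tᶜ = n - k) (p : Perm (Fin k) → Prop) [DecidablePred p]
    (q : Perm (Fin (n - k)) → Prop) [DecidablePred q] :
    ∑ u ∈ univ.filter (fun u => p (pattern u T hk) ∧ q (pattern u Tᶜ hk')),
        (X : ℤ[X]) ^ invCount u =
      qbinom n k * ((∑ a ∈ univ.filter p, X ^ invCount a) *
        ∑ b ∈ univ.filter q, X ^ invCount b) := by
  rw [sum_filter, Fintype.sum_bijective _ (splitPerm_bijective hk hk') _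
    (fun t => if p t.2.1 ∧ q t.2.2 then
      X ^ crossings t.1.1 * (X ^ invCount t.2.1 * X ^ invCount t.2.2) else 0)
    (fun u => by simp only [invCount_eq_crossings_add hT hk hk' u, pow_add, mul_assoc]; rfl)]
  rw [Fintype.sum_prod_type, qbinom, sum_subtype (p := fun P => #P = k) _ (by simp), sum_mul]
  refine sum_congr rfl fun P _ => ?_
  rw [Fintype.sum_prod_type, sum_filter, sum_filter, sum_mul_sum, mul_sum]
  refine sum_congr rfl fun a _ => ?_
  rw [mul_sum]
  refine sum_congr rfl fun b _ => ?_
  split_ifs <;> simp_all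

def topValues (n k : ℕ) : Finset (Fin n) :=
  univ.filter fun v => n - k ≤ (v : ℕ)

section topValues

variable {k : ℕ}

lemma isUpperSet_topValues : IsUpperSet (topValues n k : Set (Fin n)) := fun x y hxy hx => by
  simp only [topValues, coe_filter, mem_univ, true_and, Set.mem_ofPred_eq] at hx ⊢
  exact hx.trans hxy

lemma compl_topValues : (topValues n k)ᶜ = univ.filter fun v : Fin n => (v : ℕ) < n - k := by
  ext
  simp only [topValues, mem_compl, mem_filter, mem_univ, true_and, not_le]

lemma card_compl_topValues : #(topValues n k)ᶜ = n - k := by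
  rw [compl_topValues, Fin.card_filter_val_lt]
  omega

lemma card_topValues (hk : k ≤ n) : #(topValues n k) = k := by
  have h := card_compl (topValues n k)
  have h' := card_le_univ (topValues n k)
  simp only [card_compl_topValues, Fintype.card_fin] at h h'
  omega

lemma sum_pow_invCount_eq_qbinom_mul (hk : k ≤ n) :
    ∑ u : Perm (Fin n), (X : ℤ[X]) ^ invCount u =
      qbinom n k * ((∑ a : Perm (Fin k), X ^ invCount a) *
        ∑ b : Perm (Fin (n - k)), X ^ invCount b) := by
  simpa using sum_filter_patterns isUpperSet_topValues (card_topValues hk)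
    card_compl_topValues (fun _ => True) (fun _ => True)

end topValues

lemma crossings_singleton (p : Fin n) : crossings {p} = n - 1 - p := by
  have h : (univ.filter fun q : Fin n × Fin n => q.1 ∈ ({p} : Finset _) ∧ q.2 ∉ ({p} : Finset _) ∧
      q.1 < q.2) = {p} ×ˢ Ioi p := by
    ext ⟨i, j⟩
    simp only [mem_filter, mem_univ, true_and, mem_singleton, mem_product, mem_Ioi]
    constructor
    · rintro ⟨rfl, -, hij⟩
      exact ⟨rfl, hij⟩
    · rintro ⟨rfl, hij⟩
      exact ⟨rfl, hij.ne', hij⟩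
  rw [crossings, h, card_product, card_singleton, one_mul, Fin.card_Ioi]

lemma qbinom_one (N : ℕ) : qbinom (N + 1) 1 = qnum (N + 1) := by
  rw [qbinom, powersetCard_one, sum_map]
  simp only [Function.Embedding.coeFn_mk, crossings_singleton]
  rw [qnum, Fin.sum_univ_eq_sum_range (fun k => (X : ℤ[X]) ^ (N + 1 - 1 - k)) (N + 1)]
  exact sum_range_reflect (fun i => (X : ℤ[X]) ^ i) (N + 1)

lemma sum_pow_invCount_eq_qfact (N : ℕ) :
    ∑ u : Perm (Fin N), (X : ℤ[X]) ^ invCount u = qfact N := by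
  induction N with
  | zero => simp [qfact]
  | succ N ih =>
    rw [sum_pow_invCount_eq_qbinom_mul (Nat.le_add_left 1 N), qbinom_one, Nat.add_sub_cancel, ih,
      show qfact (N + 1) = qfact N * qnum (N + 1) from prod_range_succ _ _]
    simp [mul_comm]

lemma qbinom_mul_qfact_mul_qfact {k : ℕ} (hk : k ≤ n) :
    qbinom n k * (qfact k * qfact (n - k)) = qfact n := by
  simpa only [sum_pow_invCount_eq_qfact] using (sum_pow_invCount_eq_qbinom_mul hk).symm

lemma exists_cut_of_avoids_3142 (hn : 0 < n) {π : Perm (Fin n)}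
    (h3142 : ¬ ∃ i j k h : Fin n, i < j ∧ j < k ∧ k < h ∧ π j < π h ∧ π h < π i ∧ π i < π k)
    (hfl : π ⟨n - 1, Nat.sub_lt hn Nat.one_pos⟩ < π ⟨0, hn⟩) :
    ∃ m, 1 ≤ m ∧ m < n ∧ ∀ i j : Fin n, (i : ℕ) < m → m ≤ (j : ℕ) → π j < π i := by
  set z : Fin n := ⟨0, hn⟩
  set J := univ.filter fun j => π z ≤ π j
  have hJ : J.Nonempty := ⟨z, by simp [J]⟩
  set jm := J.max' hJ
  have hjm : π z ≤ π jm := (mem_filter.1 (J.max'_mem hJ)).2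
  have hmax : ∀ j, π z ≤ π j → j ≤ jm := fun j hj => J.le_max' j (by simp [J, hj])
  have hlast : (jm : ℕ) < n - 1 := by
    refine lt_of_le_of_ne (by omega) fun h => ?_
    rw [show jm = ⟨n - 1, by omega⟩ from Fin.ext h] at hjm
    exact not_le.2 hfl hjm
  refine ⟨jm + 1, by omega, by omega, fun i j hi hj => lt_of_not_ge fun hij => ?_⟩
  -- `jm` is the last position with value `≥ π z`; a violation of the cut is `3142` at `z, i, jm, j`
  have hjz : π j < π z := lt_of_not_ge fun h => by
    have := Fin.le_def.1 (hmax j h)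
    omega
  have hij : π i < π j := lt_of_le_of_ne hij fun h => by
    rw [π.injective h] at hi
    omega
  have hzi : z < i := Fin.lt_def.2 <| Nat.pos_of_ne_zero fun h => by
    rw [show i = z from Fin.ext h] at hij
    exact lt_asymm hij hjz
  have hijm : i < jm := by
    refine lt_of_le_of_ne (Fin.le_def.2 (by omega)) fun h => ?_
    rw [h] at hij
    exact not_le.2 (hij.trans hjz) hjm
  exact h3142 ⟨z, i, jm, j, hzi, hijm, Fin.lt_def.2 (by omega), hij, hjz,
    lt_of_le_of_ne hjm fun h => (hzi.trans hijm).ne (π.injective h)⟩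

lemma lt_iff_le_apply_of_cut {π : Perm (Fin n)} {m : ℕ} (hmn : m < n)
    (hcut : ∀ i j : Fin n, (i : ℕ) < m → m ≤ (j : ℕ) → π j < π i) (i : Fin n) :
    (i : ℕ) < m ↔ n - m ≤ (π i : ℕ) := by
  constructor
  · intro hi
    have h : (Ici ⟨m, hmn⟩).image π ⊆ Iio (π i) := by
      simp only [subset_iff, mem_image, mem_Ici, mem_Iio]
      rintro _ ⟨j, hj, rfl⟩
      exact hcut i j hi hj
    simpa [card_image_of_injective _ π.injective] using card_le_card h
  · intro hi
    by_contra hmi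
    have h : (Iio ⟨m, hmn⟩).image π ⊆ Ioi (π i) := by
      simp only [subset_iff, mem_image, mem_Iio, mem_Ioi]
      rintro _ ⟨j, hj, rfl⟩
      exact hcut j i hj (by simpa using hmi)
    have := card_le_card h
    simp [card_image_of_injective _ π.injective] at this
    omega

section cut

variable {π : Perm (Fin n)} {m : ℕ} (hπ : ∀ i : Fin n, (i : ℕ) < m ↔ n - m ≤ (π i : ℕ))
include hπ

lemma mem_positions_topValues {x : Fin n} : x ∈ positions π (topValues n m) ↔ (x : ℕ) < m := by
  simp [topValues, hπ]

lemma symm_lt_symm_of_mem_topValues {x y : Fin n} (hx : x ∉ topValues n m)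
    (hy : y ∈ topValues n m) : π.symm y < π.symm x := by
  have hy' : (π.symm y : ℕ) < m := (mem_positions_topValues hπ).1 (by simpa using hy)
  have hx' : ¬ (π.symm x : ℕ) < m := fun h => hx (by simpa using (mem_positions_topValues hπ).2 h)
  exact Fin.lt_def.2 (by omega)

lemma val_pattern_topValues (hmn : m ≤ n) (i : Fin m) :
    (pattern π (topValues n m) (card_topValues hmn) i : ℕ) + (n - m) =
      π ⟨i, i.2.trans_le hmn⟩ := by
  have h := congrArg Fin.val (orderEmbOfFin_pattern_apply (card_topValues hmn) π i)
  rw [orderEmbOfFin_eq_of_mem_iff (c := n - m) (by omega) (by simp [topValues]; omega),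
    orderEmbOfFin_eq_of_mem_iff (c := 0) (by omega) (by simp [mem_positions_topValues hπ])] at h
  simpa [add_comm] using h

lemma val_pattern_compl_topValues (i : Fin (n - m)) :
    (pattern π (topValues n m)ᶜ card_compl_topValues i : ℕ) =
      π ⟨m + i, Nat.add_lt_of_lt_sub' i.2⟩ := by
  have hmn : m ≤ n := by have := i.2; omega
  have h := congrArg Fin.val (orderEmbOfFin_pattern_apply card_compl_topValues π i)
  rw [orderEmbOfFin_eq_of_mem_iff (c := 0) (by omega) (by simp [compl_topValues]),
    orderEmbOfFin_eq_of_mem_iff (c := m) (by omega)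
      (by simp [positions_compl, mem_positions_topValues hπ]; omega)] at h
  simpa using h

end cut

/-- If `π ∈ S_n` is separable with `a_1 > a_n`, then `π` is the
concatenation of a block `π_A` on the letters `{n-m+1,…,n}` and a block `π_B` on the
letters `{1,…,n-m}` (0-indexed below; `σA`, `σB` are the renormalized blocks), and
`F(Λ_π, q) = [n choose m]_q · F(Λ_{σ_A}, q) · F(Λ_{σ_B}, q)`, where the Gaussian
binomial coefficient `C` is characterized by `C · [m]! [n-m]! = [n]!`. -/
theorem FLam_eq_mul_of_first_gt_last (n : ℕ) (hn : 0 < n) (π : Equiv.Perm (Fin n))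
    (hsep : IsSeparable π) (hfl : π ⟨n - 1, by omega⟩ < π ⟨0, hn⟩) :
    ∃ m : ℕ, ∃ _h1 : 1 ≤ m, ∃ hmn : m < n,
      (∀ i : Fin n, (i : ℕ) < m ↔ n - m ≤ (π i : ℕ)) ∧
      ∃ σA : Equiv.Perm (Fin m), ∃ σB : Equiv.Perm (Fin (n - m)),
        (∀ i : Fin m, (σA i : ℕ) + (n - m) = (π ⟨i, i.2.trans hmn⟩ : ℕ)) ∧
        (∀ i : Fin (n - m),
          (σB i : ℕ) = (π ⟨m + i, by have := i.2; omega⟩ : ℕ)) ∧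
        ∃ C : Polynomial ℤ, C * (qfact m * qfact (n - m)) = qfact n ∧
          FLam π = C * (FLam σA * FLam σB) := by
  classical
  obtain ⟨m, hm1, hmn, hcut⟩ := exists_cut_of_avoids_3142 hn hsep.1 hfl
  have hπ := lt_iff_le_apply_of_cut hmn hcut
  have hT := card_topValues hmn.le
  refine ⟨m, hm1, hmn, hπ, pattern π _ hT, pattern π _ card_compl_topValues,
    val_pattern_topValues hπ hmn.le, val_pattern_compl_topValues hπ, qbinom n m,
    qbinom_mul_qfact_mul_qfact hmn.le, ?_⟩
  rw [FLam, filter_congr fun u _ => wle_iff_wle_pattern isUpperSet_topValues hT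
    card_compl_topValues (fun x hx y hy => symm_lt_symm_of_mem_topValues hπ hx hy) u]
  exact sum_filter_patterns isUpperSet_topValues hT card_compl_topValues
    (fun a => wle a (pattern π _ hT)) (fun b => wle b (pattern π _ card_compl_topValues))

end SepPerm
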